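/- Fix E > 0, q_a < q_b, and let V be C², 1-periodic, max V = 0. For ε > 0 let q_ε solve q'' = −(1/ε)V'(q/ε) with q_ε(0) = q_a, energy E, and positive velocity, and let T_ε be the unique time with q_ε(T_ε) = q_b. Then T_ε → σ(E)(q_b − q_a) as ε → 0, where σ(E) = ∫_0^1 1/√(2(E − V(γ))) dγ. -/

import Mathlib

open Real intervalIntegral Filter

/-! Energy conservation gives `q'_ε = √(2 (E - V (q_ε / ε)))`, so the travel time is
`T_ε = ∫_{q_a}^{q_b} dγ / √(2 (E - V (γ / ε))) = ε ∫_{q_a/ε}^{q_b/ε} dγ / √(2 (E - V γ))`.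
The integrand is 1-periodic and bounded by `1 / √(2E)`, so over an interval of length `L`
its integral differs from `L σ(E)` by at most `2 / √(2E)` (whole periods plus a remainder).
Hence `|T_ε - σ(E) (q_b - q_a)| ≤ 2ε / √(2E)`. -/

theorem Function.Periodic.norm_intervalIntegral_sub_smul_le {E : Type*} [NormedAddCommGroup E]
    [NormedSpace ℝ E] {f : ℝ → E} {p M : ℝ} (hf : Function.Periodic f p) (hp : 0 < p)
    (hfi : IntervalIntegrable f MeasureTheory.volume 0 p) (hM : ∀ x, ‖f x‖ ≤ M) (a b : ℝ) :
    ‖(∫ x in a..b, f x) - ((b - a) / p) • ∫ x in 0..p, f x‖ ≤ 2 * (M * p) := by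
  have hint := hf.intervalIntegrable₀ hp.ne' hfi
  set n := ⌊(b - a) / p⌋
  set r := Int.fract ((b - a) / p)
  have hr : r ∈ Set.Ico (0 : ℝ) 1 := ⟨Int.fract_nonneg _, Int.fract_lt_one _⟩
  have hb : b = (a + n • p) + r * p := by
    rw [add_assoc, add_comm (n • p), Int.fract_div_mul_self_add_zsmul_eq p (b - a) hp.ne']; ring
  have hM0 : 0 ≤ M := (norm_nonneg _).trans (hM 0)
  have hsplit : ∫ x in a..b, f x = n • (∫ x in 0..p, f x) + ∫ x in a + n • p..b, f x := by
    rw [← integral_add_adjacent_intervals (hint a (a + n • p)) (hint _ b),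
      hf.intervalIntegral_add_zsmul_eq n a hint, hf.intervalIntegral_add_eq a 0, zero_add]
  have hcoef : (b - a) / p = n + r := (Int.floor_add_fract _).symm
  have hrest : ‖∫ x in a + n • p..b, f x‖ ≤ M * p := by
    calc ‖∫ x in a + n • p..b, f x‖ ≤ M * |b - (a + n • p)| :=
          norm_integral_le_of_norm_le_const fun x _ => hM x
      _ = M * p * r := by rw [hb, add_sub_cancel_left, abs_of_nonneg (mul_nonneg hr.1 hp.le)]; ring
      _ ≤ M * p := mul_le_of_le_one_right (mul_nonneg hM0 hp.le) hr.2.le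
  have hperiod : ‖r • ∫ x in 0..p, f x‖ ≤ M * p := by
    calc ‖r • ∫ x in 0..p, f x‖ = r * ‖∫ x in 0..p, f x‖ := by
          rw [norm_smul, Real.norm_of_nonneg hr.1]
      _ ≤ 1 * (M * |p - 0|) := by
          gcongr
          · exact hr.2.le
          · exact norm_integral_le_of_norm_le_const fun x _ => hM x
      _ = M * p := by rw [sub_zero, abs_of_pos hp, one_mul]
  calc ‖(∫ x in a..b, f x) - ((b - a) / p) • ∫ x in 0..p, f x‖
      = ‖(∫ x in a + n • p..b, f x) - r • ∫ x in 0..p, f x‖ := by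
        rw [hsplit, hcoef, add_smul, Int.cast_smul_eq_zsmul, add_sub_add_left_eq_sub]
    _ ≤ 2 * (M * p) := by linarith [norm_sub_le (∫ x in a + n • p..b, f x) (r • ∫ x in 0..p, f x)]

theorem Function.Periodic.norm_smul_intervalIntegral_div_sub_le {E : Type*}
    [NormedAddCommGroup E] [NormedSpace ℝ E] {f : ℝ → E} {p M ε : ℝ}
    (hf : Function.Periodic f p) (hp : 0 < p)
    (hfi : IntervalIntegrable f MeasureTheory.volume 0 p) (hM : ∀ x, ‖f x‖ ≤ M) (hε : 0 < ε)
    (a b : ℝ) :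
    ‖ε • (∫ x in a / ε..b / ε, f x) - ((b - a) / p) • ∫ x in 0..p, f x‖ ≤ 2 * (M * p) * ε := by
  have hcoef : (b - a) / p = ε * ((b / ε - a / ε) / p) := by field_simp
  rw [hcoef, mul_smul, ← smul_sub, norm_smul, norm_of_nonneg hε.le, mul_comm ε]
  gcongr
  exact hf.norm_intervalIntegral_sub_smul_le hp hfi hM _ _

theorem integral_comp_eq_sub_of_mul_deriv_eq_one {g x x' : ℝ → ℝ} (hg : Continuous g)
    (hx : ∀ t, HasDerivAt x (x' t) t) (hgx : ∀ t, g (x t) * x' t = 1) (a b : ℝ) :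
    ∫ γ in x a..x b, g γ = b - a := by
  have hF : ∀ t, HasDerivAt (fun s => ∫ γ in x a..x s, g γ) 1 t := fun t => by
    have := (hg.integral_hasStrictDerivAt (x a) (x t)).hasDerivAt.comp t (hx t)
    rwa [hgx t] at this
  simpa using (integral_eq_sub_of_hasDerivAt (a := a) (b := b) (fun t _ => hF t)
    intervalIntegrable_const).symm

theorem continuous_one_div_sqrt_two_mul_sub {V : ℝ → ℝ} (hV : Continuous V) {E : ℝ}
    (hVE : ∀ y, V y < E) : Continuous fun u => 1 / √(2 * (E - V u)) :=
  continuous_const.div (by fun_prop) fun u => (sqrt_pos.2 (by linarith [hVE u])).ne'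

theorem sub_eq_mul_integral_of_energy_eq {V : ℝ → ℝ} (hV : Continuous V) {E ε : ℝ}
    (hVE : ∀ y, V y < E) (hε : 0 < ε) {x v : ℝ → ℝ} (hx : ∀ t, HasDerivAt x (v t) t)
    (hv : ∀ t, 0 < v t) (henergy : ∀ t, 1 / 2 * v t ^ 2 + V (x t / ε) = E) (a b : ℝ) :
    b - a = ε * ∫ u in x a / ε..x b / ε, 1 / √(2 * (E - V u)) := by
  have hspeed : ∀ t, v t = √(2 * (E - V (x t / ε))) := fun t => by
    rw [show 2 * (E - V (x t / ε)) = v t ^ 2 by linarith [henergy t], sqrt_sq (hv t).le]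
  have hg := (continuous_one_div_sqrt_two_mul_sub hV hVE).comp (continuous_id.div_const ε)
  rw [← smul_eq_mul, ← integral_comp_div _ hε.ne']
  refine (integral_comp_eq_sub_of_mul_deriv_eq_one hg hx (fun t => ?_) a b).symm
  simp only [Function.comp_apply, id, hspeed t]
  exact one_div_mul_cancel (hspeed t ▸ hv t).ne'

theorem tendsto_nhdsGT_zero_of_abs_sub_le_mul {f : ℝ → ℝ} {L C : ℝ}
    (hf : ∀ ε > 0, |f ε - L| ≤ C * ε) : Tendsto f (nhdsWithin 0 (Set.Ioi 0)) (nhds L) := by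
  have hC : Tendsto (fun ε => C * ε) (nhdsWithin 0 (Set.Ioi 0)) (nhds 0) := by
    simpa using ((continuous_const_mul C).tendsto 0).mono_left nhdsWithin_le_nhds
  exact tendsto_iff_norm_sub_tendsto_zero.2 <|
    squeeze_zero_norm' (eventually_mem_nhdsWithin.mono fun ε hε => by simpa using hf ε hε) hC

theorem bvp_fixed_energy_arrival_time_general
    (V : ℝ → ℝ) (hV : ContDiff ℝ 2 V) (hper : Function.Periodic V 1)
    (hmax : IsGreatest (Set.range V) 0)
    (E q_a q_b : ℝ) (hE : 0 < E)
    (q q' : ℝ → ℝ → ℝ) (T : ℝ → ℝ)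
    (hq : ∀ ε > (0:ℝ), ∀ t, HasDerivAt (q ε) (q' ε t) t)
    (h0 : ∀ ε > (0:ℝ), q ε 0 = q_a)
    (hpos : ∀ ε > (0:ℝ), ∀ t, 0 < q' ε t)
    (henergy : ∀ ε > (0:ℝ), ∀ t, (1 / 2) * (q' ε t) ^ 2 + V (q ε t / ε) = E)
    (hT : ∀ ε > (0:ℝ), q ε (T ε) = q_b) :
    Tendsto T (nhdsWithin 0 (Set.Ioi 0))
      (nhds ((∫ γ in (0:ℝ)..1, 1 / Real.sqrt (2 * (E - V γ))) * (q_b - q_a))) := by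
  have hV0 : ∀ y, V y ≤ 0 := fun y => hmax.2 ⟨y, rfl⟩
  have hVE : ∀ y, V y < E := fun y => (hV0 y).trans_lt hE
  have hcont := continuous_one_div_sqrt_two_mul_sub hV.continuous hVE
  have hbound : ∀ u, ‖1 / √(2 * (E - V u))‖ ≤ 1 / √(2 * E) := fun u => by
    rw [norm_of_nonneg (by positivity)]
    gcongr
    linarith [hV0 u]
  have hslow_per : Function.Periodic (fun u => 1 / √(2 * (E - V u))) 1 := fun u => by
    simp only [hper u]
  refine tendsto_nhdsGT_zero_of_abs_sub_le_mul (C := 2 * (1 / √(2 * E) * 1)) fun ε hε => ?_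
  have htime := sub_eq_mul_integral_of_energy_eq hV.continuous hVE hε (hq ε hε) (hpos ε hε)
    (henergy ε hε) 0 (T ε)
  rw [sub_zero, h0 ε hε, hT ε hε] at htime
  rw [htime, mul_comm _ (q_b - q_a)]
  simpa using hslow_per.norm_smul_intervalIntegral_div_sub_le one_pos
    (hcont.intervalIntegrable 0 1) hbound hε q_a q_b

/-- Theorem 2.5 / Corollary 2.6 (fixed-energy boundary value problem): the arrival
    times `T_ε` with `q_ε(T_ε) = q_b` converge to `σ(E)(q_b − q_a)` as `ε → 0⁺`. -/
theorem bvp_fixed_energy_arrival_time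
    (V : ℝ → ℝ) (hV : ContDiff ℝ 2 V) (hper : Function.Periodic V 1)
    (hmax : IsGreatest (Set.range V) 0)
    (E q_a q_b : ℝ) (hE : 0 < E) (hab : q_a < q_b)
    (q q' : ℝ → ℝ → ℝ) (T : ℝ → ℝ)
    (hq : ∀ ε > (0:ℝ), ∀ t, HasDerivAt (q ε) (q' ε t) t)
    (hODE : ∀ ε > (0:ℝ), ∀ t, HasDerivAt (q' ε) (-(1 / ε) * deriv V (q ε t / ε)) t)
    (h0 : ∀ ε > (0:ℝ), q ε 0 = q_a)
    (hpos : ∀ ε > (0:ℝ), ∀ t, 0 < q' ε t)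
    (henergy : ∀ ε > (0:ℝ), ∀ t, (1 / 2) * (q' ε t) ^ 2 + V (q ε t / ε) = E)
    (hT : ∀ ε > (0:ℝ), q ε (T ε) = q_b) :
    Tendsto T (nhdsWithin 0 (Set.Ioi 0))
      (nhds ((∫ γ in (0:ℝ)..1, 1 / Real.sqrt (2 * (E - V γ))) * (q_b - q_a))) :=
  bvp_fixed_energy_arrival_time_general V hV hper hmax E q_a q_b hE q q' T hq h0 hpos henergy hT
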